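/- Let K be a field, n ≥ 1, and p = (p_0, …, p_{n-1}) ∈ K^n. Then for A = F_p the crossover identity Σ_{k=0}^{n-1} g_k A^k (b + b_n p) + g_n A^n (b + b_n p) = Σ_{k=0}^{n-1} b_k A^k (g + g_n p) + b_n A^n (g + g_n p) holds for all b, g ∈ K^n and all scalars b_n, g_n ∈ K. -/

import Mathlib

open Matrix

/-- The second companion matrix `F_p` of `p ∈ K^{n+1}`: columns `0,…,n-1` are
`e_1,…,e_n` and the last column is `p`. -/
def companion {K : Type*} [Field K] {n : ℕ} (p : Fin (n + 1) → K) :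
    Matrix (Fin (n + 1)) (Fin (n + 1)) K :=
  Matrix.of fun i j => if j = Fin.last n then p i else if (i : ℕ) = (j : ℕ) + 1 then 1 else 0

/-- The reachability (Krylov) matrix `R(A, g) = [g, Ag, …, A^{n-1} g]`. -/
def krylov {K : Type*} [Field K] {n : ℕ} (A : Matrix (Fin n) (Fin n) K) (g : Fin n → K) :
    Matrix (Fin n) (Fin n) K :=
  Matrix.of fun i j => (A ^ (j : ℕ)).mulVec g i

/-- `b(A) = Σ_{i=0}^{n-1} b_i A^i`. -/
def polyEval {K : Type*} [Field K] {n : ℕ} (b : Fin n → K) (A : Matrix (Fin n) (Fin n) K) :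
    Matrix (Fin n) (Fin n) K :=
  ∑ i : Fin n, b i • A ^ (i : ℕ)

/-!
Write `c(A) = Σ_{k ≤ n} c_k A^k + c_{n+1} A^{n+1}`. The unit vector `e_0` is cyclic for `F_p`:
`F_p^k e_0 = e_k` for `k ≤ n` and `F_p^{n+1} e_0 = p`, so `c(F_p) e_0 = c + c_{n+1} p`. Both sides of
the identity are therefore `g(F_p) b(F_p) e_0` and `b(F_p) g(F_p) e_0`, which agree because
polynomials in one matrix commute.
-/

section PolyEval

variable {K : Type*} [Field K] {n : ℕ}

lemma polyEval_mulVec (c : Fin n → K) (A : Matrix (Fin n) (Fin n) K) (v : Fin n → K) :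
    polyEval c A *ᵥ v = ∑ k : Fin n, c k • (A ^ (k : ℕ) *ᵥ v) := by
  simp only [polyEval, sum_mulVec, smul_mulVec]

lemma polyEval_add_smul_pow_mulVec (c : Fin n → K) (cm : K) (A : Matrix (Fin n) (Fin n) K) (m : ℕ)
    (v : Fin n → K) :
    (polyEval c A + cm • A ^ m) *ᵥ v = ∑ k : Fin n, c k • (A ^ (k : ℕ) *ᵥ v) + cm • (A ^ m *ᵥ v) := by
  rw [add_mulVec, smul_mulVec, polyEval_mulVec]

lemma polyEval_eq_aeval (c : Fin n → K) (A : Matrix (Fin n) (Fin n) K) :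
    polyEval c A = Polynomial.aeval A (∑ k : Fin n, Polynomial.monomial k (c k)) := by
  simp [polyEval, Polynomial.aeval_monomial, Algebra.smul_def]

lemma commute_polyEval_add_smul_pow (A : Matrix (Fin n) (Fin n) K) (b g : Fin n → K)
    (bm gm : K) (m : ℕ) :
    Commute (polyEval b A + bm • A ^ m) (polyEval g A + gm • A ^ m) := by
  have h (c : Fin n → K) (cm : K) : polyEval c A + cm • A ^ m =
      Polynomial.aeval A (∑ k : Fin n, Polynomial.monomial k (c k) + Polynomial.monomial m cm) := by
    rw [map_add, ← polyEval_eq_aeval, Polynomial.aeval_monomial, Algebra.smul_def]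
  rw [h b bm, h g gm]
  exact (Commute.all _ _).map _

end PolyEval

section Companion

variable {K : Type*} [Field K] {n : ℕ} (p : Fin (n + 1) → K)

lemma companion_mulVec_single_castSucc (i : Fin n) :
    companion p *ᵥ Pi.single i.castSucc 1 = Pi.single i.succ 1 := by
  ext j
  simp [companion, Pi.single_apply, Fin.ext_iff, i.isLt.ne]

lemma companion_mulVec_single_last : companion p *ᵥ Pi.single (Fin.last n) 1 = p := by
  ext j
  simp [companion]

lemma companion_pow_mulVec_single_zero (k : Fin (n + 1)) :
    companion p ^ (k : ℕ) *ᵥ Pi.single 0 1 = Pi.single k 1 := by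
  induction k using Fin.induction with
  | zero => rw [Fin.val_zero, pow_zero, one_mulVec]
  | succ i ih =>
    rw [Fin.val_succ, pow_succ', ← mulVec_mulVec, ← Fin.val_castSucc, ih,
      companion_mulVec_single_castSucc]

lemma companion_pow_succ_mulVec_single_zero : companion p ^ (n + 1) *ᵥ Pi.single 0 1 = p := by
  have h := companion_pow_mulVec_single_zero p (Fin.last n)
  rw [Fin.val_last] at h
  rw [pow_succ', ← mulVec_mulVec, h, companion_mulVec_single_last]

lemma polyEval_companion_add_smul_pow_mulVec_single_zero (c : Fin (n + 1) → K) (cn : K) :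
    (polyEval c (companion p) + cn • companion p ^ (n + 1)) *ᵥ Pi.single 0 1 = c + cn • p := by
  rw [polyEval_add_smul_pow_mulVec, companion_pow_succ_mulVec_single_zero]
  simp_rw [companion_pow_mulVec_single_zero]
  congr 1
  ext j
  simp [Pi.single_apply]

end Companion

/-- For `A = F_p` the crossover identity
`Σ_{k=0}^n A^k g_k (b + b_n p) = Σ_{k=0}^n A^k b_k (g + g_n p)`
holds for all `b, g ∈ K^n` and all scalars `b_n, g_n ∈ K`. -/
theorem crossover_of_companion {K : Type*} [Field K] {n : ℕ} (p : Fin (n + 1) → K)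
    (b g : Fin (n + 1) → K) (bn gn : K) :
    (∑ k : Fin (n + 1), g k • ((companion p) ^ (k : ℕ)).mulVec (b + bn • p)) +
        gn • ((companion p) ^ (n + 1)).mulVec (b + bn • p) =
      (∑ k : Fin (n + 1), b k • ((companion p) ^ (k : ℕ)).mulVec (g + gn • p)) +
        bn • ((companion p) ^ (n + 1)).mulVec (g + gn • p) := by
  rw [← polyEval_add_smul_pow_mulVec, ← polyEval_add_smul_pow_mulVec,
    ← polyEval_companion_add_smul_pow_mulVec_single_zero p b bn,
    ← polyEval_companion_add_smul_pow_mulVec_single_zero p g gn, mulVec_mulVec, mulVec_mulVec,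
    (commute_polyEval_add_smul_pow _ g b gn bn _).eq]
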